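/- Suppose M ≥ 2 and i ∈ B \ B⁺. Then the Shapley value of i under u admits the closed form φ_i = −M⁺(H_M − 1)/(M(M − 1)). -/

import Mathlib

/-!
Players outside the bucket `B` are null for `u`, and summing them out of the Shapley weights
reduces `φ_i` to the game played on `B` alone. There
the marginal contribution of `i` to a coalition `T` of size `t` is `-|T ∩ B⁺| / (t (t + 1))`.
Each agreeing player lies in `C(M - 2, t - 1)` of the coalitions of size `t`, so size `t`
contributes `M⁺ / (M (M - 1) (t + 1))`, and summing over `1 ≤ t ≤ M - 1` gives `H_M - 1`.
-/

open Finset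

/-- Bucket-vote utility: `u(S) = |S ∩ B⁺| / |S ∩ B|` if `S ∩ B ≠ ∅`, else `0`. -/
noncomputable def u {α : Type*} [DecidableEq α] (B Bp : Finset α) (S : Finset α) : ℝ :=
  if (S ∩ B).Nonempty then ((S ∩ Bp).card : ℝ) / ((S ∩ B).card : ℝ) else 0

/-- Shapley value of player `i` in the game on `N` with utility `u B Bp`. -/
noncomputable def shapley {α : Type*} [DecidableEq α] (N B Bp : Finset α) (i : α) : ℝ :=
  ∑ S ∈ (N.erase i).powerset,
    ((S.card.factorial * (N.card - S.card - 1).factorial : ℝ) / (N.card.factorial : ℝ))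
      * (u B Bp (insert i S) - u B Bp S)

/-- The `m`-th harmonic number `H m = ∑_{j=1}^m 1/j` (with `H 0 = 0`). -/
noncomputable def H (m : ℕ) : ℝ := ∑ j ∈ Finset.range m, (1 : ℝ) / (j + 1)

namespace Finset

variable {α β : Type*} [DecidableEq α] [AddCommMonoid β]

theorem sum_powerset_union_of_disjoint {s t : Finset α} (h : Disjoint s t)
    (f : Finset α → β) :
    ∑ S ∈ (s ∪ t).powerset, f S = ∑ T ∈ s.powerset, ∑ K ∈ t.powerset, f (T ∪ K) := by
  induction s using Finset.induction generalizing f with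
  | empty => simp
  | @insert a s ha ih =>
    rw [disjoint_insert_left] at h
    have has : a ∉ s ∪ t := by simp [ha, h.1]
    rw [insert_union, sum_powerset_insert has, ih h.2, ih h.2, sum_powerset_insert ha]
    simp only [insert_union]

theorem sum_powerset_filter_mem {s : Finset α} {a : α} (ha : a ∈ s) (f : Finset α → β) :
    ∑ T ∈ s.powerset with a ∈ T, f T = ∑ T ∈ (s.erase a).powerset, f (insert a T) := by
  have hout : ∀ T ∈ (s.erase a).powerset, a ∉ T := fun T hT h =>
    notMem_erase a s (mem_powerset.1 hT h)
  rw [sum_filter]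
  conv_lhs => rw [← insert_erase ha, sum_powerset_insert (notMem_erase a s)]
  rw [sum_congr rfl fun T hT => if_neg (hout T hT), sum_const_zero, zero_add]
  exact sum_congr rfl fun T _ => if_pos (mem_insert_self a T)

theorem sum_powerset_card_inter_mul {R : Type*} [Semiring R] {s p : Finset α} (hp : p ⊆ s)
    (f : ℕ → R) :
    ∑ T ∈ s.powerset, (#(T ∩ p) : R) * f #T
      = #p * ∑ t ∈ range #s, ((#s - 1).choose t : R) * f (t + 1) := by
  have hcount : ∀ T : Finset α, (#(T ∩ p) : R) = ∑ a ∈ p, if a ∈ T then 1 else 0 := by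
    intro T
    rw [sum_boole, inter_comm, filter_mem_eq_inter]
  simp only [hcount, sum_mul, ite_mul, one_mul, zero_mul]
  rw [sum_comm, ← nsmul_eq_mul, ← sum_const]
  refine sum_congr rfl fun a ha => ?_
  have has : a ∈ s := hp ha
  rw [← sum_filter, sum_powerset_filter_mem has]
  have hcard : ∀ T ∈ (s.erase a).powerset, #(insert a T) = #T + 1 := fun T hT =>
    card_insert_of_notMem fun h => notMem_erase a s (mem_powerset.1 hT h)
  rw [sum_congr rfl fun T hT => congrArg f (hcard T hT),
    sum_powerset_apply_card (fun t => f (t + 1)), card_erase_of_mem has,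
    Nat.sub_add_cancel (card_pos.2 ⟨a, has⟩)]
  simp only [nsmul_eq_mul]

end Finset

noncomputable def shapleyWeight (n s : ℕ) : ℝ :=
  (s.factorial * (n - s - 1).factorial : ℝ) / n.factorial

theorem shapleyWeight_add_shapleyWeight_succ {n s : ℕ} (h : s + 2 ≤ n) :
    shapleyWeight n s + shapleyWeight n (s + 1) = shapleyWeight (n - 1) s := by
  obtain ⟨k, rfl⟩ : ∃ k, n = s + k + 2 := ⟨n - (s + 2), by omega⟩
  rw [show s + k + 2 - 1 = s + k + 1 by omega]
  have e1 : s + k + 2 - s - 1 = k + 1 := by omega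
  have e2 : s + k + 2 - (s + 1) - 1 = k := by omega
  have e3 : s + k + 1 - s - 1 = k := by omega
  simp only [shapleyWeight, e1, e2, e3, Nat.factorial_succ]
  field_simp
  push_cast
  ring

theorem sum_powerset_shapleyWeight_add_card {α : Type*} [DecidableEq α] (r : Finset α)
    {n s : ℕ} (h : s + #r + 1 ≤ n) :
    ∑ K ∈ r.powerset, shapleyWeight n (s + #K) = shapleyWeight (n - #r) s := by
  induction r using Finset.induction generalizing s with
  | empty => simp
  | @insert a r ha ih =>
    rw [card_insert_of_notMem ha] at h ⊢
    have hcard : ∀ K ∈ r.powerset, #(insert a K) = #K + 1 := fun K hK =>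
      card_insert_of_notMem fun h => ha (mem_powerset.1 hK h)
    have hshift : ∑ K ∈ r.powerset, shapleyWeight n (s + #(insert a K))
        = ∑ K ∈ r.powerset, shapleyWeight n (s + 1 + #K) :=
      sum_congr rfl fun K hK => by rw [hcard K hK, add_assoc, add_comm 1]
    rw [sum_powerset_insert ha, hshift, ih (by omega), ih (by omega),
      shapleyWeight_add_shapleyWeight_succ (by omega), Nat.sub_sub]

section ShapleyValue

variable {α : Type*} [DecidableEq α]

noncomputable def shapleyValue (N : Finset α) (v : Finset α → ℝ) (i : α) : ℝ :=
  ∑ S ∈ (N.erase i).powerset, shapleyWeight #N #S * (v (insert i S) - v S)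

theorem shapley_eq_shapleyValue (N B Bp : Finset α) (i : α) :
    shapley N B Bp i = shapleyValue N (u B Bp) i :=
  rfl

theorem shapleyValue_eq_of_carrier {N B : Finset α} {v : Finset α → ℝ}
    (hv : ∀ S, v (S ∩ B) = v S) (hBN : B ⊆ N) {i : α} (hi : i ∈ B) :
    shapleyValue N v i = shapleyValue B v i := by
  have hsplit : N.erase i = B.erase i ∪ (N \ B) := by
    ext x
    by_cases hx : x ∈ B
    · simp [hx, hBN hx]
    · simp only [mem_erase, mem_union, mem_sdiff, hx]
      grind
  have hdisj : Disjoint (B.erase i) (N \ B) :=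
    disjoint_sdiff.mono_left (erase_subset i B)
  have hnull : ∀ T ⊆ B, ∀ K ⊆ N \ B, v (T ∪ K) = v T := by
    intro T hT K hK
    have hKB : K ∩ B = ∅ := disjoint_iff_inter_eq_empty.1 (sdiff_disjoint.mono_left hK)
    rw [← hv, union_inter_distrib_right, inter_eq_left.2 hT, hKB, union_empty]
  have hcard : #N - #(N \ B) = #B := by
    rw [card_sdiff_of_subset hBN, Nat.sub_sub_self (card_le_card hBN)]
  rw [shapleyValue, shapleyValue, hsplit, sum_powerset_union_of_disjoint hdisj]
  refine sum_congr rfl fun T hT => ?_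
  have hTB : T ⊆ B.erase i := mem_powerset.1 hT
  have hTcard : #T + 1 ≤ #B := by
    have hle := (card_le_card hTB).trans_eq (card_erase_of_mem hi)
    have hpos := card_pos.2 ⟨i, hi⟩
    omega
  have hterm : ∀ K ∈ (N \ B).powerset,
      shapleyWeight #N #(T ∪ K) * (v (insert i (T ∪ K)) - v (T ∪ K))
        = shapleyWeight #N (#T + #K) * (v (insert i T) - v T) := by
    intro K hK
    have hK' := mem_powerset.1 hK
    have hTB' : T ⊆ B := hTB.trans (erase_subset i B)
    rw [card_union_of_disjoint ((hdisj.mono_left hTB).mono_right hK'), ← insert_union,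
      hnull _ (insert_subset hi hTB') K hK', hnull T hTB' K hK']
  rw [sum_congr rfl hterm, ← sum_mul, sum_powerset_shapleyWeight_add_card _ (by
    rw [card_sdiff_of_subset hBN]; have := card_le_card hBN; omega), hcard]

end ShapleyValue

section BucketUtility

variable {α : Type*} [DecidableEq α] {B Bp : Finset α}

theorem u_inter_right (hBpB : Bp ⊆ B) (S : Finset α) : u B Bp (S ∩ B) = u B Bp S := by
  rw [u, u, inter_assoc, inter_self, inter_assoc, inter_eq_right.2 hBpB]

theorem u_insert_sub_u {i : α} (hiB : i ∈ B) (hiBp : i ∉ Bp) {T : Finset α}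
    (hT : T ⊆ B.erase i) :
    u B Bp (insert i T) - u B Bp T = -(#(T ∩ Bp) / (#T * (#T + 1))) := by
  have hTB : T ∩ B = T := inter_eq_left.2 (hT.trans (erase_subset i B))
  have hiT : i ∉ T := fun h => notMem_erase i B (hT h)
  rw [u, u, insert_inter_of_mem hiB, insert_inter_of_notMem hiBp, hTB,
    if_pos (insert_nonempty i T), card_insert_of_notMem hiT]
  rcases T.eq_empty_or_nonempty with rfl | hne
  · simp
  · have : (#T : ℝ) ≠ 0 := by exact_mod_cast (card_pos.2 hne).ne'
    rw [if_pos hne]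
    push_cast
    field_simp
    ring

end BucketUtility

theorem choose_mul_shapleyWeight_succ {m t : ℕ} (h : t < m) :
    ((m - 1).choose t : ℝ) * shapleyWeight (m + 1) (t + 1) = (t + 1) / ((m + 1) * m) := by
  obtain ⟨k, rfl⟩ : ∃ k, m = k + 1 := ⟨m - 1, by omega⟩
  have hch := Nat.choose_mul_factorial_mul_factorial (show t ≤ k by omega)
  rw [show k + 1 - 1 = k by omega, shapleyWeight, show k + 1 + 1 - (t + 1) - 1 = k - t by omega,
    Nat.factorial_succ, Nat.factorial_succ, Nat.factorial_succ]
  have hch0 : (k.choose t : ℝ) ≠ 0 := by exact_mod_cast (Nat.choose_pos (by omega)).ne'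
  rw [← hch]
  push_cast
  field_simp

theorem H_succ_sub_one (m : ℕ) : H (m + 1) - 1 = ∑ t ∈ range m, 1 / ((t : ℝ) + 2) := by
  rw [H, sum_range_succ']
  norm_num
  exact sum_congr rfl fun t _ => by ring

theorem stmt6_general {α : Type*} [DecidableEq α] (N B Bp : Finset α)
    (hBpB : Bp ⊆ B) (hBN : B ⊆ N)
    (i : α) (hiB : i ∈ B) (hiBp : i ∉ Bp) :
    shapley N B Bp i =
      -((Bp.card : ℝ) * (H B.card - 1)) / ((B.card : ℝ) * ((B.card : ℝ) - 1)) := by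
  obtain ⟨m, hm⟩ : ∃ m, #B = m + 1 := ⟨#B - 1, (Nat.sub_add_cancel (card_pos.2 ⟨i, hiB⟩)).symm⟩
  have hA : #(B.erase i) = m := by rw [card_erase_of_mem hiB, hm, Nat.add_sub_cancel]
  have hBpA : Bp ⊆ B.erase i := fun j hj => mem_erase.2 ⟨fun h => hiBp (h ▸ hj), hBpB hj⟩
  rw [shapley_eq_shapleyValue, shapleyValue_eq_of_carrier (u_inter_right hBpB) hBN hiB,
    shapleyValue]
  calc ∑ T ∈ (B.erase i).powerset, shapleyWeight #B #T * (u B Bp (insert i T) - u B Bp T)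
      = -∑ T ∈ (B.erase i).powerset,
          (#(T ∩ Bp) : ℝ) * (shapleyWeight (m + 1) #T / (#T * (#T + 1))) := by
        rw [← sum_neg_distrib]
        refine sum_congr rfl fun T hT => ?_
        rw [u_insert_sub_u hiB hiBp (mem_powerset.1 hT), hm]
        ring
    _ = -(#Bp * ∑ t ∈ range m,
          ((m - 1).choose t : ℝ) * (shapleyWeight (m + 1) (t + 1) / ((t + 1) * (t + 2)))) := by
        rw [sum_powerset_card_inter_mul hBpA (fun t => shapleyWeight (m + 1) t / (t * (t + 1))),
          hA]
        push_cast
        simp only [add_assoc, one_add_one_eq_two]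
    _ = -(#Bp * ∑ t ∈ range m, 1 / ((t : ℝ) + 2) / ((m + 1) * m)) := by
        congr 2
        refine sum_congr rfl fun t ht => ?_
        rw [← mul_div_assoc, choose_mul_shapleyWeight_succ (mem_range.1 ht)]
        field_simp
    _ = _ := by
        rw [← sum_div, ← H_succ_sub_one, hm]
        push_cast
        ring

/-- Closed form of the Shapley value for an incorrect-label bucket member (`M ≥ 2`):
`φ_i = −M⁺(H_M − 1)/(M(M − 1))`. -/
theorem stmt6 {α : Type*} [DecidableEq α] (N B Bp : Finset α)
    (hBpB : Bp ⊆ B) (hBN : B ⊆ N) (hM : 2 ≤ B.card)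
    (i : α) (hiB : i ∈ B) (hiBp : i ∉ Bp) :
    shapley N B Bp i =
      -((Bp.card : ℝ) * (H B.card - 1)) / ((B.card : ℝ) * ((B.card : ℝ) - 1)) :=
  stmt6_general N B Bp hBpB hBN i hiB hiBp
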